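/- arXiv:2311.06165 — 2 statements merged into one kernel-verified Lean document; each statement's English description precedes it below -/
import Mathlib

section
/- Fix μ ≤ 1, R > 0, r ≥ 0. For ξ ∈ [0, π], ρ(ξ) = μR(cos ξ + √(cos²ξ − 1 + (R+r)²/(μ²R²))) satisfies ρ(ξ) ≥ (1−μ)R + r > r whenever μ < 1; in particular the EZ boundary lies strictly outside the capture disk of radius r when R > 0 and μ < 1. -/
open Real Set

noncomputable def rho (μ R r ξ : ℝ) : ℝ :=
  μ * R * (Real.cos ξ + Real.sqrt ((Real.cos ξ)^2 - 1 + (R + r)^2 / (μ^2 * R^2)))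

/- With `a = μR`, `b = R + r` and `c = cos ξ` we have `ρ = a c + √(a²(c² - 1) + b²)`, and
`ρ ≥ b - a` says `b - a(1 + c)` is at most the root: squaring leaves the gap
`2a(1 + c)(b - a)`, nonnegative since `c ≥ -1` and `a ≤ b`. -/

theorem sub_le_mul_add_sqrt {a b c : ℝ} (ha : 0 ≤ a) (hab : a ≤ b) (hc : -1 ≤ c) :
    b - a ≤ a * c + √(a ^ 2 * (c ^ 2 - 1) + b ^ 2) := by
  have hsq : (b - a * (1 + c)) ^ 2 ≤ a ^ 2 * (c ^ 2 - 1) + b ^ 2 := by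
    have hgap : 0 ≤ a * (1 + c) * (b - a) :=
      mul_nonneg (mul_nonneg ha (by linarith)) (sub_nonneg.2 hab)
    have hid : a ^ 2 * (c ^ 2 - 1) + b ^ 2 - (b - a * (1 + c)) ^ 2 =
        2 * (a * (1 + c) * (b - a)) := by ring
    linarith
  linarith [le_abs_self (b - a * (1 + c)), Real.abs_le_sqrt hsq]

theorem rho_eq {μ R : ℝ} (hμR : 0 < μ * R) (r ξ : ℝ) :
    rho μ R r ξ = μ * R * cos ξ + √((μ * R) ^ 2 * (cos ξ ^ 2 - 1) + (R + r) ^ 2) := by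
  have hne : μ ^ 2 * R ^ 2 ≠ 0 := by rw [← mul_pow]; exact pow_ne_zero 2 hμR.ne'
  have hrad : (μ * R) ^ 2 * (cos ξ ^ 2 - 1 + (R + r) ^ 2 / (μ ^ 2 * R ^ 2)) =
      (μ * R) ^ 2 * (cos ξ ^ 2 - 1) + (R + r) ^ 2 := by
    rw [mul_pow, mul_add, mul_div_cancel₀ _ hne]
  rw [rho, mul_add, ← hrad, Real.sqrt_mul (sq_nonneg _), Real.sqrt_sq hμR.le]

theorem stmt_4 (μ R r : ℝ) (hμ0 : 0 < μ) (hμ1 : μ < 1) (hR : 0 < R) (hr : 0 ≤ r) :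
    (∀ ξ ∈ Set.Icc 0 Real.pi, (1 - μ) * R + r ≤ rho μ R r ξ) ∧
    r < (1 - μ) * R + r := by
  have hgap : 0 < (1 - μ) * R := mul_pos (sub_pos.2 hμ1) hR
  refine ⟨fun ξ _ => ?_, by linarith⟩
  have hμR : 0 < μ * R := mul_pos hμ0 hR
  have hbound := sub_le_mul_add_sqrt hμR.le (b := R + r) (by linarith) (neg_one_le_cos ξ)
  rw [rho_eq hμR]
  linarith
end

section
/- Let μ ≤ 1, R > 0, r ≥ 0, ξ ∈ [−π, π], and let ρ = μR(cos ξ + √(cos²ξ − 1 + (R+r)²/(μ²R²))). If an Agent starts at distance d > ρ from P₀ with aspect angle ξ and both agents move in straight lines (Agent at speed μ v_P along its heading, Pursuer at speed v_P toward any fixed interception point), then any point at which the Pursuer comes within r of the Agent requires Pursuer travel distance > R. -/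
/-!
Let `L = v_P t` be the Pursuer's travel when it comes within `r` of the Agent, and suppose
`L ≤ R`. Since the Agent is slower (`μ ≤ 1`), the Pursuer could keep following it for the
remaining travel `R - L`, so the Agent's position after Pursuer travel `R` lies within `R + r`
of the Pursuer's start. By the law of cosines this position is at squared distance
`d² - 2 d μ R cos ξ + μ² R²`, and `(R + r)² ≥` that quantity forces `d ≤ ρ(ξ)`.
-/

open Real Set Complex

theorem rho_eq_add_sqrt {μ R : ℝ} (r ξ : ℝ) (hμ : 0 < μ) (hR : 0 < R) :
    rho μ R r ξ = μ * R * Real.cos ξ + √((R + r) ^ 2 - (μ * R * Real.sin ξ) ^ 2) := by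
  have hμR : 0 < μ * R := mul_pos hμ hR
  have hrad : (μ * R) ^ 2 * (Real.cos ξ ^ 2 - 1 + (R + r) ^ 2 / (μ ^ 2 * R ^ 2)) =
      (R + r) ^ 2 - (μ * R * Real.sin ξ) ^ 2 := by
    field_simp
    linear_combination (μ ^ 2 * R ^ 2) * Real.sin_sq_add_cos_sq ξ
  rw [rho, mul_add, ← hrad, sqrt_mul (sq_nonneg _), sqrt_sq hμR.le]

theorem norm_sq_ofReal_add_smul_exp (d m ξ : ℝ) :
    ‖(d : ℂ) + m • exp ((π - ξ) * I)‖ ^ 2 = (d - m * Real.cos ξ) ^ 2 + (m * Real.sin ξ) ^ 2 := by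
  have hw : exp ((π - ξ) * I) = ((-Real.cos ξ : ℝ) : ℂ) + ((Real.sin ξ : ℝ) : ℂ) * I := by
    rw [← Real.cos_pi_sub, ← Real.sin_pi_sub, exp_mul_I, ← ofReal_sub, ← ofReal_cos, ← ofReal_sin]
  rw [Complex.sq_norm, normSq_apply, hw]
  simp only [add_re, add_im, ofReal_re, ofReal_im, real_smul, mul_re, mul_im, I_re, I_im]
  ring

theorem le_rho_of_norm_le {μ R r ξ d : ℝ} (hμ : 0 < μ) (hR : 0 < R)
    (h : ‖(d : ℂ) + (μ * R) • exp ((π - ξ) * I)‖ ≤ R + r) :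
    d ≤ rho μ R r ξ := by
  have hsq : (d - μ * R * Real.cos ξ) ^ 2 ≤ (R + r) ^ 2 - (μ * R * Real.sin ξ) ^ 2 := by
    have := pow_le_pow_left₀ (norm_nonneg _) h 2
    rw [norm_sq_ofReal_add_smul_exp] at this
    linarith
  rw [rho_eq_add_sqrt r ξ hμ hR]
  linarith [(abs_le_sqrt hsq).trans' (le_abs_self _)]

theorem norm_add_smul_le_of_capture {E : Type*} [NormedAddCommGroup E] [NormedSpace ℝ E]
    {a w Q : E} {μ L R r : ℝ} (hw : ‖w‖ = 1) (hμ0 : 0 ≤ μ) (hμ1 : μ ≤ 1) (hLR : L ≤ R)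
    (hQ : ‖Q‖ ≤ L) (hcapture : ‖a + (μ * L) • w - Q‖ ≤ r) :
    ‖a + (μ * R) • w‖ ≤ R + r := by
  have hfollow : ‖(μ * (R - L)) • w‖ ≤ R - L := by
    rw [norm_smul, hw, mul_one, Real.norm_of_nonneg (mul_nonneg hμ0 (sub_nonneg.2 hLR))]
    exact mul_le_of_le_one_left (sub_nonneg.2 hLR) hμ1
  calc ‖a + (μ * R) • w‖ = ‖(μ * (R - L)) • w + (a + (μ * L) • w - Q) + Q‖ := by
        congr 1; rw [mul_sub, sub_smul]; abel
    _ ≤ ‖(μ * (R - L)) • w‖ + ‖a + (μ * L) • w - Q‖ + ‖Q‖ := norm_add₃_le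
    _ ≤ R + r := by linarith

theorem stmt_19_general (μ R r ξ v_P d : ℝ) (hμ0 : 0 < μ) (hμ1 : μ ≤ 1) (hR : 0 < R)
    (hd : rho μ R r ξ < d)
    (A : ℝ → ℂ)
    (hA : ∀ t, A t = (d : ℂ) + (μ * v_P * t) •
      Complex.exp ((Real.pi - ξ) * Complex.I)) :
    ∀ (t : ℝ) (Q : ℂ), 0 ≤ t → ‖Q‖ ≤ v_P * t → ‖A t - Q‖ ≤ r →
      R < v_P * t := by
  intro t Q _ hQ hcapture
  by_contra! hRt
  have hw : ‖exp ((π - ξ) * I)‖ = 1 := mod_cast norm_exp_ofReal_mul_I (π - ξ)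
  rw [hA, mul_assoc] at hcapture
  exact hd.not_ge <| le_rho_of_norm_le hμ0 hR <|
    norm_add_smul_le_of_capture hw hμ0.le hμ1 hRt hQ hcapture

/-- With the Pursuer starting at the origin, the Agent at distance `d > ρ(ξ)`
on the positive real axis, moving with speed `μ v_P` at aspect angle `ξ` to the
line of sight (direction `π - ξ` from the positive x-axis), any point reachable
by the Pursuer (travel distance `≤ v_P t`) that is within `r` of the Agent at
time `t` requires Pursuer travel distance exceeding `R`. -/
theorem stmt_19 (μ R r ξ v_P d : ℝ) (hμ0 : 0 < μ) (hμ1 : μ ≤ 1) (hR : 0 < R)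
    (hr : 0 ≤ r) (hξ : ξ ∈ Set.Icc (-Real.pi) Real.pi) (hv : 0 < v_P)
    (hd : rho μ R r ξ < d)
    (A : ℝ → ℂ)
    (hA : ∀ t, A t = (d : ℂ) + (μ * v_P * t) •
      Complex.exp ((Real.pi - ξ) * Complex.I)) :
    ∀ (t : ℝ) (Q : ℂ), 0 ≤ t → ‖Q‖ ≤ v_P * t → ‖A t - Q‖ ≤ r →
      R < v_P * t :=
  stmt_19_general μ R r ξ v_P d hμ0 hμ1 hR hd A hA
end
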